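/- For all u, v ∈ ℝ^J, the Lorenz 96 bilinear map satisfies ‖B(u,v)‖ ≤ 2·‖u‖·‖v‖, where ‖·‖ is the Euclidean norm on ℝ^J. -/

import Mathlib

/-! Each of the four terms of `B(u, v)` is a pointwise product of cyclic shifts of `u` and `v`.
Shifts are isometries and `‖f g‖₂ ≤ ‖f‖₂ ‖g‖₂`, so every term has norm at most `‖u‖ ‖v‖`;
with the prefactor `1/2` this gives the constant `2`. -/

/-- The symmetric bilinear map of the Lorenz 96 model, with coordinates
indexed cyclically modulo `J`. -/
noncomputable def lorenz96B (J : ℕ) [NeZero J]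
    (u v : EuclideanSpace ℝ (Fin J)) : EuclideanSpace ℝ (Fin J) :=
  WithLp.toLp 2 (fun j => (1 / 2) * (v (j - 1) * u (j + 1) + u (j - 1) * v (j + 1)
    - v (j - 2) * u (j - 1) - u (j - 2) * v (j - 1)))

namespace EuclideanSpace

variable {ι : Type*} [Fintype ι]

theorem norm_toLp_comp_equiv (u : EuclideanSpace ℝ ι) (σ : ι ≃ ι) :
    ‖WithLp.toLp 2 (fun i => u (σ i))‖ = ‖u‖ := by
  simp only [EuclideanSpace.norm_eq]
  rw [Fintype.sum_equiv σ (fun i => ‖u (σ i)‖ ^ 2) (fun i => ‖u i‖ ^ 2) fun _ => rfl]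

theorem norm_toLp_mul_le (u v : EuclideanSpace ℝ ι) :
    ‖WithLp.toLp 2 (fun i => u i * v i)‖ ≤ ‖u‖ * ‖v‖ := by
  simp only [EuclideanSpace.norm_eq]
  rw [← Real.sqrt_mul (by positivity), Finset.sum_mul]
  refine Real.sqrt_le_sqrt (Finset.sum_le_sum fun i _ => ?_)
  rw [norm_mul, mul_pow]
  exact mul_le_mul_of_nonneg_left
    (Finset.single_le_sum (f := fun j => ‖v j‖ ^ 2) (fun j _ => by positivity)
      (Finset.mem_univ i)) (by positivity)

theorem norm_toLp_mul_comp_le (u v : EuclideanSpace ℝ ι) (σ τ : ι ≃ ι) :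
    ‖WithLp.toLp 2 (fun i => u (σ i) * v (τ i))‖ ≤ ‖u‖ * ‖v‖ := by
  simpa only [norm_toLp_comp_equiv] using
    norm_toLp_mul_le (WithLp.toLp 2 fun i => u (σ i)) (WithLp.toLp 2 fun i => v (τ i))

end EuclideanSpace

open EuclideanSpace in
theorem lorenz96B_norm_le_general (J : ℕ) [NeZero J]
    (u v : EuclideanSpace ℝ (Fin J)) :
    ‖lorenz96B J u v‖ ≤ 2 * ‖u‖ * ‖v‖ := by
  set a := WithLp.toLp 2 fun j => v (j - 1) * u (j + 1)
  set b := WithLp.toLp 2 fun j => u (j - 1) * v (j + 1)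
  set c := WithLp.toLp 2 fun j => v (j - 2) * u (j - 1)
  set d := WithLp.toLp 2 fun j => u (j - 2) * v (j - 1)
  have hB : lorenz96B J u v = (1 / 2 : ℝ) • (a + b - c - d) := by
    ext j
    simp [lorenz96B, a, b, c, d]
  have ha : ‖a‖ ≤ ‖u‖ * ‖v‖ := by
    rw [mul_comm]; exact norm_toLp_mul_comp_le v u (Equiv.subRight 1) (Equiv.addRight 1)
  have hb : ‖b‖ ≤ ‖u‖ * ‖v‖ := norm_toLp_mul_comp_le u v (Equiv.subRight 1) (Equiv.addRight 1)
  have hc : ‖c‖ ≤ ‖u‖ * ‖v‖ := by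
    rw [mul_comm]; exact norm_toLp_mul_comp_le v u (Equiv.subRight 2) (Equiv.subRight 1)
  have hd : ‖d‖ ≤ ‖u‖ * ‖v‖ := norm_toLp_mul_comp_le u v (Equiv.subRight 2) (Equiv.subRight 1)
  calc ‖lorenz96B J u v‖ ≤ 1 / 2 * (‖a‖ + ‖b‖ + ‖c‖ + ‖d‖) := by
        rw [hB, norm_smul, Real.norm_of_nonneg (by norm_num)]
        gcongr
        exact norm_sub_le_of_le (norm_sub_le_of_le (norm_add_le a b) le_rfl) le_rfl
    _ ≤ 2 * ‖u‖ * ‖v‖ := by linarith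

theorem lorenz96B_norm_le (J : ℕ) [NeZero J] (hJ : 4 ≤ J)
    (u v : EuclideanSpace ℝ (Fin J)) :
    ‖lorenz96B J u v‖ ≤ 2 * ‖u‖ * ‖v‖ :=
  lorenz96B_norm_le_general J u v
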